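/- arXiv:0911.4415 — 8 statements merged into one kernel-verified Lean document; each statement's English description precedes it below -/
import Mathlib

section
/- For any partition of the natural numbers into two sets M₁ and M₂, at least one of these sets contains three distinct elements forming a nontrivial arithmetic progression (i.e., there exist a and d > 0 with a, a+d, a+2d all in the same set). -/
set_option maxHeartbeats 4000000 in
theorem stmt_0 (M₁ M₂ : Set ℕ) (hpart : M₁ ∪ M₂ = Set.univ) :
    (∃ a d : ℕ, 0 < d ∧ a ∈ M₁ ∧ a + d ∈ M₁ ∧ a + 2 * d ∈ M₁) ∨
    (∃ a d : ℕ, 0 < d ∧ a ∈ M₂ ∧ a + d ∈ M₂ ∧ a + 2 * d ∈ M₂) := by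
  have hmem : ∀ n : ℕ, n ∈ M₁ ∨ n ∈ M₂ := fun n => by
    have : n ∈ M₁ ∪ M₂ := hpart ▸ Set.mem_univ n
    exact this
  have h0 := hmem 0; have h1 := hmem 1; have h2 := hmem 2
  have h3 := hmem 3; have h4 := hmem 4; have h5 := hmem 5
  have h6 := hmem 6; have h7 := hmem 7; have h8 := hmem 8
  rcases h0 with h0|h0 <;> rcases h1 with h1|h1 <;> rcases h2 with h2|h2 <;>
    rcases h3 with h3|h3 <;> rcases h4 with h4|h4 <;> rcases h5 with h5|h5 <;>
    rcases h6 with h6|h6 <;> rcases h7 with h7|h7 <;> rcases h8 with h8|h8 <;>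
  first
  | exact Or.inl ⟨0,1,one_pos,h0,h1,h2⟩ | exact Or.inr ⟨0,1,one_pos,h0,h1,h2⟩
  | exact Or.inl ⟨1,1,one_pos,h1,h2,h3⟩ | exact Or.inr ⟨1,1,one_pos,h1,h2,h3⟩
  | exact Or.inl ⟨2,1,one_pos,h2,h3,h4⟩ | exact Or.inr ⟨2,1,one_pos,h2,h3,h4⟩
  | exact Or.inl ⟨3,1,one_pos,h3,h4,h5⟩ | exact Or.inr ⟨3,1,one_pos,h3,h4,h5⟩
  | exact Or.inl ⟨4,1,one_pos,h4,h5,h6⟩ | exact Or.inr ⟨4,1,one_pos,h4,h5,h6⟩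
  | exact Or.inl ⟨5,1,one_pos,h5,h6,h7⟩ | exact Or.inr ⟨5,1,one_pos,h5,h6,h7⟩
  | exact Or.inl ⟨6,1,one_pos,h6,h7,h8⟩ | exact Or.inr ⟨6,1,one_pos,h6,h7,h8⟩
  | exact Or.inl ⟨0,2,two_pos,h0,h2,h4⟩ | exact Or.inr ⟨0,2,two_pos,h0,h2,h4⟩
  | exact Or.inl ⟨1,2,two_pos,h1,h3,h5⟩ | exact Or.inr ⟨1,2,two_pos,h1,h3,h5⟩
  | exact Or.inl ⟨2,2,two_pos,h2,h4,h6⟩ | exact Or.inr ⟨2,2,two_pos,h2,h4,h6⟩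
  | exact Or.inl ⟨3,2,two_pos,h3,h5,h7⟩ | exact Or.inr ⟨3,2,two_pos,h3,h5,h7⟩
  | exact Or.inl ⟨4,2,two_pos,h4,h6,h8⟩ | exact Or.inr ⟨4,2,two_pos,h4,h6,h8⟩
  | exact Or.inl ⟨0,3,three_pos,h0,h3,h6⟩ | exact Or.inr ⟨0,3,three_pos,h0,h3,h6⟩
  | exact Or.inl ⟨1,3,three_pos,h1,h4,h7⟩ | exact Or.inr ⟨1,3,three_pos,h1,h4,h7⟩
  | exact Or.inl ⟨2,3,three_pos,h2,h5,h8⟩ | exact Or.inr ⟨2,3,three_pos,h2,h5,h8⟩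
  | exact Or.inl ⟨0,4,four_pos,h0,h4,h8⟩ | exact Or.inr ⟨0,4,four_pos,h0,h4,h8⟩
end

section
/- For any partition of the natural numbers into two sets, at least one of the two sets contains infinitely many nontrivial 3-term arithmetic progressions; precisely, the set of pairs (a, d) with d > 0 such that a, a+d, a+2d all lie in that set is infinite. -/
/-!
The finite van der Waerden theorem (Mathlib's `Combinatorics.exists_mono_homothetic_copy`, a
consequence of Hales–Jewett) applied to the colouring shifted by `n` gives a monochromatic
3-term progression starting beyond `n`, for every `n`. Hence the progressions that are
monochromatic in some colour are unbounded, and by pigeonhole over the finitely many colours one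
colour class contains infinitely many of them.
-/

open Set

def threeAPs (M : Set ℕ) : Set (ℕ × ℕ) :=
  {p | 0 < p.2 ∧ p.1 ∈ M ∧ p.1 + p.2 ∈ M ∧ p.1 + 2 * p.2 ∈ M}

theorem threeAPs_mono {M N : Set ℕ} (h : M ⊆ N) : threeAPs M ⊆ threeAPs N :=
  fun _ ⟨hd, h₀, h₁, h₂⟩ => ⟨hd, h h₀, h h₁, h h₂⟩

theorem exists_mem_threeAPs_fiber_le {κ : Type*} [Finite κ] (C : ℕ → κ) (n : ℕ) :
    ∃ c, ∃ p ∈ threeAPs (C ⁻¹' {c}), n ≤ p.1 := by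
  obtain ⟨d, hd, b, c, hC⟩ :=
    Combinatorics.exists_mono_homothetic_copy ({0, 1, 2} : Finset ℕ) (fun m => C (n + m))
  have h₀ := hC 0 (by simp)
  have h₁ := hC 1 (by simp)
  have h₂ := hC 2 (by simp)
  simp only [smul_eq_mul, mul_zero, mul_one, zero_add] at h₀ h₁ h₂
  refine ⟨c, (n + b, d), ⟨hd, h₀, ?_, ?_⟩, Nat.le_add_right n b⟩
  · simpa [add_assoc, add_comm b d] using h₁
  · simpa [add_assoc, add_comm b, mul_comm d 2] using h₂

theorem infinite_of_forall_exists_le_fst {s : Set (ℕ × ℕ)} (h : ∀ n, ∃ p ∈ s, n ≤ p.1) :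
    s.Infinite := by
  refine infinite_of_not_bddAbove fun ⟨b, hb⟩ => ?_
  obtain ⟨p, hp, hle⟩ := h (b.1 + 1)
  have := (hb hp).1
  omega

theorem exists_infinite_threeAPs_fiber {κ : Type*} [Finite κ] (C : ℕ → κ) :
    ∃ c, (threeAPs (C ⁻¹' {c})).Infinite := by
  by_contra! hfin
  refine infinite_of_forall_exists_le_fst (s := ⋃ c, threeAPs (C ⁻¹' {c})) (fun n => ?_)
    (finite_iUnion hfin)
  obtain ⟨c, p, hp, hle⟩ := exists_mem_threeAPs_fiber_le C n
  exact ⟨p, mem_iUnion.2 ⟨c, hp⟩, hle⟩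

theorem exists_infinite_threeAPs_of_iUnion_eq_univ {ι : Type*} [Finite ι] (M : ι → Set ℕ)
    (hM : ⋃ i, M i = univ) : ∃ i, (threeAPs (M i)).Infinite := by
  have hcover (m : ℕ) : ∃ i, m ∈ M i := mem_iUnion.1 (hM ▸ mem_univ m)
  choose C hC using hcover
  obtain ⟨i, hi⟩ := exists_infinite_threeAPs_fiber C
  refine ⟨i, hi.mono (threeAPs_mono ?_)⟩
  rintro m rfl
  exact hC m

theorem stmt_1 (M₁ M₂ : Set ℕ) (hpart : M₁ ∪ M₂ = Set.univ) :
    {p : ℕ × ℕ | 0 < p.2 ∧ p.1 ∈ M₁ ∧ p.1 + p.2 ∈ M₁ ∧ p.1 + 2 * p.2 ∈ M₁}.Infinite ∨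
    {p : ℕ × ℕ | 0 < p.2 ∧ p.1 ∈ M₂ ∧ p.1 + p.2 ∈ M₂ ∧ p.1 + 2 * p.2 ∈ M₂}.Infinite := by
  obtain ⟨b, hb⟩ := exists_infinite_threeAPs_of_iUnion_eq_univ (fun b => cond b M₁ M₂)
    (by rw [← union_eq_iUnion, hpart])
  cases b
  · exact Or.inr hb
  · exact Or.inl hb
end

section
/- For any finite set F of natural numbers and any partition of ℕ \ F into two sets, at least one of the two sets contains a nontrivial 3-term arithmetic progression a, a+d, a+2d with d > 0. -/
theorem stmt_2 (F : Finset ℕ) (M₁ M₂ : Set ℕ)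
    (hpart : M₁ ∪ M₂ = Set.univ \ ↑F) :
    (∃ a d : ℕ, 0 < d ∧ a ∈ M₁ ∧ a + d ∈ M₁ ∧ a + 2 * d ∈ M₁) ∨
    (∃ a d : ℕ, 0 < d ∧ a ∈ M₂ ∧ a + d ∈ M₂ ∧ a + 2 * d ∈ M₂) := by
  classical
  set N := F.sup id + 1 with hN
  have hnotF : ∀ n : ℕ, (n + N) ∉ F := by
    intro n hn
    have := Finset.le_sup (f := id) hn
    simp only [id] at this
    omega
  have hmem : ∀ n : ℕ, (n + N) ∈ M₁ ∨ (n + N) ∈ M₂ := by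
    intro n
    have : (n + N) ∈ M₁ ∪ M₂ := by
      rw [hpart]; exact ⟨trivial, hnotF n⟩
    exact this
  obtain ⟨a, ha, b, c, hc⟩ :=
    Combinatorics.exists_mono_homothetic_copy ({0, 1, 2} : Finset ℕ)
      (fun n => decide ((n + N) ∈ M₁))
  have h0 := hc 0 (by simp)
  have h1 := hc 1 (by simp)
  have h2 := hc 2 (by simp)
  simp only [smul_eq_mul, Nat.mul_zero, Nat.mul_one, Nat.zero_add] at h0 h1 h2
  rcases c with _ | _
  · right
    refine ⟨b + N, a, ha, ?_, ?_, ?_⟩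
    · rcases hmem b with h | h
      · simp [h] at h0
      · exact h
    · rcases hmem (a + b) with h | h
      · simp [h] at h1
      · have : a + b + N = b + N + a := by ring
        rwa [← this]
    · rcases hmem (a * 2 + b) with h | h
      · simp [h] at h2
      · have : a * 2 + b + N = b + N + 2 * a := by ring
        rwa [← this]
  · left
    refine ⟨b + N, a, ha, ?_, ?_, ?_⟩
    · exact of_decide_eq_true h0
    · have : a + b + N = b + N + a := by ring
      rw [← this]; exact of_decide_eq_true h1
    · have : a * 2 + b + N = b + N + 2 * a := by ring
      rw [← this]; exact of_decide_eq_true h2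
end

section
/- Let (aₙ)ₙ∈ℕ be an arithmetic progression given by aₙ = a + n·r. For any partition of the set {aₙ : n ∈ ℕ} of its terms into two subsets, at least one subset contains three terms a_{i}, a_{i+d}, a_{i+2d} with d > 0, which form an arithmetic progression. -/
open Classical in
theorem stmt_5 (a r : ℤ) (M₁ M₂ : Set ℤ)
    (hpart : M₁ ∪ M₂ = {x : ℤ | ∃ n : ℕ, x = a + (n : ℤ) * r}) :
    (∃ i d : ℕ, 0 < d ∧ a + (i : ℤ) * r ∈ M₁ ∧ a + ((i + d : ℕ) : ℤ) * r ∈ M₁ ∧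
      a + ((i + 2 * d : ℕ) : ℤ) * r ∈ M₁) ∨
    (∃ i d : ℕ, 0 < d ∧ a + (i : ℤ) * r ∈ M₂ ∧ a + ((i + d : ℕ) : ℤ) * r ∈ M₂ ∧
      a + ((i + 2 * d : ℕ) : ℤ) * r ∈ M₂) := by
  have hmem : ∀ n : ℕ, a + (n : ℤ) * r ∈ M₁ ∪ M₂ := by
    intro n; rw [hpart]; exact ⟨n, rfl⟩
  obtain ⟨d, hd, b, c, hc⟩ := Combinatorics.exists_mono_homothetic_copy
    ({0, 1, 2} : Finset ℕ) (fun n => decide (a + (n : ℤ) * r ∈ M₁))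
  have h0 := hc 0 (by simp)
  have h1 := hc 1 (by simp)
  have h2 := hc 2 (by simp)
  simp only [smul_eq_mul, mul_zero, mul_one, zero_add] at h0 h1 h2
  cases c with
  | true =>
    left
    refine ⟨b, d, hd, of_decide_eq_true h0, ?_, ?_⟩
    · rw [show b + d = d + b from by ring]; exact of_decide_eq_true h1
    · rw [show b + 2 * d = d * 2 + b from by ring]; exact of_decide_eq_true h2
  | false =>
    right
    refine ⟨b, d, hd, ?_, ?_, ?_⟩
    · rcases hmem b with h | h
      · exact absurd h (of_decide_eq_false h0)
      · exact h
    · rw [show b + d = d + b from by ring]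
      rcases hmem (d + b) with h | h
      · exact absurd h (of_decide_eq_false h1)
      · exact h
    · rw [show b + 2 * d = d * 2 + b from by ring]
      rcases hmem (d * 2 + b) with h | h
      · exact absurd h (of_decide_eq_false h2)
      · exact h
end

section
/- Let M be a set of integers containing all terms of a nonconstant arithmetic progression a + n·r (r ≠ 0, n ∈ ℕ). For any partition of M into two subsets, at least one subset contains three distinct elements in arithmetic progression (x, y, z with x + z = 2y and x ≠ z). -/
set_option maxRecDepth 100000 in
lemma vdw9 : ∀ f : Fin 9 → Bool, ∃ i j k : Fin 9,
    i.val + k.val = 2 * j.val ∧ i.val < k.val ∧ f i = f j ∧ f j = f k := by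
  decide

theorem stmt_7 (M : Set ℤ) (a r : ℤ) (hr : r ≠ 0)
    (hM : ∀ n : ℕ, a + (n : ℤ) * r ∈ M) (M₁ M₂ : Set ℤ)
    (hpart : M₁ ∪ M₂ = M) :
    (∃ x y z : ℤ, x ∈ M₁ ∧ y ∈ M₁ ∧ z ∈ M₁ ∧ x + z = 2 * y ∧ x ≠ z) ∨
    (∃ x y z : ℤ, x ∈ M₂ ∧ y ∈ M₂ ∧ z ∈ M₂ ∧ x + z = 2 * y ∧ x ≠ z) := by
  classical
  let p : ℕ → ℤ := fun n => a + (n : ℤ) * r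
  have hmem : ∀ n : ℕ, p n ∈ M₁ ∨ p n ∈ M₂ := by
    intro n; have h := hM n; rw [← hpart] at h; exact h
  obtain ⟨i, j, k, hijk, hik, hfij, hfjk⟩ :=
    vdw9 (fun i => decide (p i.val ∈ M₁))
  have hcast : (i.val : ℤ) + (k.val : ℤ) = 2 * (j.val : ℤ) := by exact_mod_cast hijk
  have hxz : p i.val + p k.val = 2 * p j.val := by
    show a + (i.val : ℤ) * r + (a + (k.val : ℤ) * r) = 2 * (a + (j.val : ℤ) * r)
    linear_combination hcast * r
  have hne : p i.val ≠ p k.val := by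
    show a + (i.val : ℤ) * r ≠ a + (k.val : ℤ) * r
    intro h
    have h2 : (i.val : ℤ) * r = (k.val : ℤ) * r := by linarith
    have h3 : (i.val : ℤ) = (k.val : ℤ) := mul_right_cancel₀ hr h2
    have : i.val = k.val := by exact_mod_cast h3
    omega
  by_cases hb : p i.val ∈ M₁
  · left
    have hj : p j.val ∈ M₁ := by
      have : decide (p j.val ∈ M₁) = true := by rw [← hfij]; simpa using hb
      exact of_decide_eq_true this
    have hk : p k.val ∈ M₁ := by
      have : decide (p k.val ∈ M₁) = true := by rw [← hfjk, ← hfij]; simpa using hb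
      exact of_decide_eq_true this
    exact ⟨_, _, _, hb, hj, hk, hxz, hne⟩
  · right
    have hfi : decide (p i.val ∈ M₁) = false := by simpa using hb
    have hj : p j.val ∉ M₁ := by
      have : decide (p j.val ∈ M₁) = false := by rw [← hfij]; exact hfi
      exact of_decide_eq_false this
    have hk : p k.val ∉ M₁ := by
      have : decide (p k.val ∈ M₁) = false := by rw [← hfjk, ← hfij]; exact hfi
      exact of_decide_eq_false this
    exact ⟨_, _, _, (hmem i.val).resolve_left hb, (hmem j.val).resolve_left hj,
      (hmem k.val).resolve_left hk, hxz, hne⟩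
end

section
/- For any function c : ℕ → Bool (a two-coloring of ℕ) and any natural number N, there exist a ≥ N and d > 0 such that c(a) = c(a+d) = c(a+2d); that is, every two-coloring of ℕ admits monochromatic nontrivial 3-term arithmetic progressions with arbitrarily large first term. -/
set_option maxRecDepth 4000 in
lemma key9 : ∀ b : Fin 9 → Bool, ∃ a d : Fin 9, 0 < d.val ∧ a.val + 2 * d.val < 9 ∧
    b a = b ⟨(a.val + d.val) % 9, Nat.mod_lt _ (by norm_num)⟩ ∧
    b ⟨(a.val + d.val) % 9, Nat.mod_lt _ (by norm_num)⟩ =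
      b ⟨(a.val + 2 * d.val) % 9, Nat.mod_lt _ (by norm_num)⟩ := by decide

theorem stmt_11 (c : ℕ → Bool) (N : ℕ) :
    ∃ a d : ℕ, N ≤ a ∧ 0 < d ∧ c a = c (a + d) ∧ c (a + d) = c (a + 2 * d) := by
  obtain ⟨a, d, hd, hlt, h1, h2⟩ := key9 (fun i => c (N + i.val))
  refine ⟨N + a.val, d.val, Nat.le_add_right _ _, hd, ?_, ?_⟩
  · simpa [Nat.mod_eq_of_lt (by omega : a.val + d.val < 9), Nat.add_assoc] using h1
  · simpa [Nat.mod_eq_of_lt (by omega : a.val + d.val < 9),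
      Nat.mod_eq_of_lt (by omega : a.val + 2 * d.val < 9), Nat.add_assoc] using h2
end

section
/- For any two-coloring c : ℕ → Bool and any k ∈ ℕ with k ≥ 5, if c(k) = c(k+1), then there exist three numbers in nontrivial arithmetic progression, all within the interval [k-5, k+5], receiving the same color. -/
theorem stmt_12 (c : ℕ → Bool) (k : ℕ) (hk : 5 ≤ k) (h : c k = c (k + 1)) :
    ∃ a d : ℕ, 0 < d ∧ k - 5 ≤ a ∧ a + 2 * d ≤ k + 5 ∧
      c a = c (a + d) ∧ c (a + d) = c (a + 2 * d) := by
  obtain ⟨m, rfl⟩ : ∃ m, k = m + 5 := ⟨k - 5, by omega⟩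
  have key : ∀ x y : Bool, x ≠ y → x = !y := by decide
  have key2 : ∀ x y z : Bool, x = !y → z = !y → x = z := by decide
  -- c (m+5) = c (m+6)
  by_cases h1 : c (m + 7) = c (m + 6)
  · exact ⟨m + 5, 1, by omega, by omega, by omega, by simpa using h,
      by simpa using h1.symm⟩
  by_cases h2 : c (m + 4) = c (m + 5)
  · exact ⟨m + 4, 1, by omega, by omega, by omega, by simpa using h2,
      by simpa using h⟩
  -- now c(m+4), c(m+7) are both the opposite color
  have h1' := key _ _ (fun e => h1 (e.trans h))
  have h2' := key _ _ h2
  by_cases h3 : c (m + 10) = c (m + 5)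
  · by_cases h4 : c (m + 8) = c (m + 5)
    · exact ⟨m + 6, 2, by omega, by omega, by omega,
        by simpa using (h.symm.trans h4.symm), by simpa using h4.trans h3.symm⟩
    have h4' := key _ _ h4
    by_cases h5 : c (m + 9) = c (m + 5)
    · by_cases h6 : c (m + 3) = c (m + 5)
      · exact ⟨m + 3, 3, by omega, by omega, by omega,
          by simpa using h6.trans h, by simpa using h.symm.trans h5.symm⟩
      have h6' := key _ _ h6
      by_cases h7 : c (m + 2) = c (m + 5)
      · exact ⟨m + 2, 4, by omega, by omega, by omega,
          by simpa using h7.trans h, by simpa using h.symm.trans h3.symm⟩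
      have h7' := key _ _ h7
      exact ⟨m + 2, 1, by omega, by omega, by omega,
        by simpa using key2 _ _ _ h7' h6', by simpa using key2 _ _ _ h6' h2'⟩
    · have h5' := key _ _ h5
      exact ⟨m + 7, 1, by omega, by omega, by omega,
        by simpa using key2 _ _ _ h1' h4', by simpa using key2 _ _ _ h4' h5'⟩
  · have h3' := key _ _ h3
    exact ⟨m + 4, 3, by omega, by omega, by omega,
      by simpa using key2 _ _ _ h2' h1', by simpa using key2 _ _ _ h1' h3'⟩
end

section
/- For any two-coloring c : ℕ → Bool, at least one color class S satisfies that the set {(a,d) : d > 0, a ∈ S, a+d ∈ S, a+2d ∈ S} is infinite. -/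
set_option maxRecDepth 100000 in
lemma vdW3 : ∀ f : Fin 9 → Bool, ∃ i j k : Fin 9, i < j ∧ j < k ∧
    j.val + j.val = i.val + k.val ∧ f i = f j ∧ f j = f k := by decide

lemma key (c : ℕ → Bool) (n : ℕ) : ∃ a d : ℕ, n ≤ a ∧ 0 < d ∧
    c a = c (a + d) ∧ c (a + d) = c (a + 2 * d) := by
  obtain ⟨i, j, k, hij, hjk, hsum, h1, h2⟩ := vdW3 (fun i : Fin 9 => c (n + i))
  rw [Fin.lt_def] at hij hjk
  refine ⟨n + i, j - i, by omega, by omega, ?_, ?_⟩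
  · have : n + i + (j.val - i.val) = n + j := by omega
    rw [this]; exact h1
  · have h3 : n + i + (j.val - i.val) = n + j := by omega
    have h4 : n + i + 2 * (j.val - i.val) = n + k := by omega
    rw [h3, h4]; exact h2

theorem stmt_16 (c : ℕ → Bool) :
    ∃ b : Bool, {p : ℕ × ℕ | 0 < p.2 ∧ c p.1 = b ∧ c (p.1 + p.2) = b ∧
      c (p.1 + 2 * p.2) = b}.Infinite := by
  by_contra h
  push_neg at h
  have ht := h true
  have hf := h false
  set S : Set (ℕ × ℕ) := {p : ℕ × ℕ | 0 < p.2 ∧ c p.1 = true ∧ c (p.1 + p.2) = true ∧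
      c (p.1 + 2 * p.2) = true} with hS
  set T : Set (ℕ × ℕ) := {p : ℕ × ℕ | 0 < p.2 ∧ c p.1 = false ∧ c (p.1 + p.2) = false ∧
      c (p.1 + 2 * p.2) = false} with hT
  have hU : (Prod.fst '' (S ∪ T)).Finite := (ht.union hf).image _
  obtain ⟨N, hN⟩ := hU.bddAbove
  obtain ⟨a, d, ha, hd, h1, h2⟩ := key c (N + 1)
  have hmem : (a, d) ∈ S ∪ T := by
    cases hb : c a with
    | true => exact Or.inl ⟨hd, hb, by rw [← h1, hb], by rw [← h2, ← h1, hb]⟩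
    | false => exact Or.inr ⟨hd, hb, by rw [← h1, hb], by rw [← h2, ← h1, hb]⟩
  have := hN ⟨(a, d), hmem, rfl⟩
  omega
end
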